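/- (Finiteness of the set of local minima of the empirical Fréchet function.) Let X₁, …, X_m : Fin J → E be configurations and F(Z) = (1/m) ∑_{j=1}^m D(Z, Xⱼ)². Then the set { W : Fin J → E | W is a local minimum of F } is finite, of cardinality at most (J!)^m; indeed it is contained in the image of the map sending each m-tuple of permutations (σ₁, …, σ_m) of Fin J to the configuration i ↦ (1/m) • ∑_{j=1}^m Xⱼ (σⱼ i). -/

import Mathlib

/-- The squared L²-matching distance between two configurations of `J` points. -/
noncomputable def sqD {E : Type*} [NormedAddCommGroup E] [InnerProductSpace ℝ E] {J : ℕ}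
    (X Y : Fin J → E) : ℝ :=
  ⨅ σ : Equiv.Perm (Fin J), ∑ i, ‖X i - Y (σ i)‖ ^ 2

/-- `W` is a local minimum of the Fréchet function of the configurations `X j`. -/
def IsLocalMinFrechet {E : Type*} [NormedAddCommGroup E] [InnerProductSpace ℝ E]
    {m J : ℕ} (X : Fin m → Fin J → E) (W : Fin J → E) : Prop :=
  ∃ r > (0 : ℝ), ∀ Z : Fin J → E, (∀ i, ‖Z i - W i‖ < r) →
    (1 / m : ℝ) * ∑ j, sqD W (X j) ≤ (1 / m : ℝ) * ∑ j, sqD Z (X j)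

/-!
A local minimum `W` of the Fréchet function, with optimal matchings `σⱼ` from `W` to the `Xⱼ`,
is also a local minimum of the quadratic surrogate `Z ↦ ∑ⱼ ∑ᵢ ‖Z i - Xⱼ (σⱼ i)‖²`, which
majorises `∑ⱼ D(Z, Xⱼ)²` and agrees with it at `W`. By the parallel axis theorem this surrogate
is `m ∑ᵢ ‖Z i - B i‖²` plus a constant, where `B` is the mean of the `Xⱼ ∘ σⱼ`; it shrinks by
the factor `(1 - t)²` along the segment from `W` to `B`, so a local minimum must be `B` itself.
Hence every local minimum is one of the at most `(J!)^m` such means.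
-/

open Filter Topology

theorem sum_norm_sub_sq_eq_card_mul_add {ι E : Type*} [Fintype ι] [NormedAddCommGroup E]
    [InnerProductSpace ℝ E] (a : ι → E) (z : E) :
    ∑ j, ‖z - a j‖ ^ 2 =
      Fintype.card ι * ‖z - (Fintype.card ι : ℝ)⁻¹ • ∑ j, a j‖ ^ 2 +
        ∑ j, ‖(Fintype.card ι : ℝ)⁻¹ • ∑ k, a k - a j‖ ^ 2 := by
  rcases isEmpty_or_nonempty ι with _ | _
  · simp
  set n : ℝ := (Fintype.card ι : ℝ)
  set b := n⁻¹ • ∑ j, a j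
  have hdev : ∑ j, (b - a j) = 0 := by
    rw [Finset.sum_sub_distrib, Finset.sum_const, Finset.card_univ, ← Nat.cast_smul_eq_nsmul ℝ,
      smul_inv_smul₀ (by positivity), sub_self]
  calc ∑ j, ‖z - a j‖ ^ 2
      = ∑ j, (‖z - b‖ ^ 2 + 2 * inner ℝ (z - b) (b - a j) + ‖b - a j‖ ^ 2) := by
        refine Finset.sum_congr rfl fun j _ => ?_
        rw [← norm_add_sq_real, sub_add_sub_cancel]
    _ = n * ‖z - b‖ ^ 2 + ∑ j, ‖b - a j‖ ^ 2 := by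
        rw [Finset.sum_add_distrib, Finset.sum_add_distrib, Finset.sum_const, Finset.card_univ,
          ← Finset.mul_sum, ← inner_sum, hdev, inner_zero_right, nsmul_eq_mul]
        ring

theorem eq_of_isLocalMin_sum_norm_sub_sq {ι F : Type*} [Fintype ι] [NormedAddCommGroup F]
    [NormedSpace ℝ F] {b w : ι → F} (h : IsLocalMin (fun z => ∑ i, ‖z i - b i‖ ^ 2) w) :
    w = b := by
  set q : (ι → F) → ℝ := fun z => ∑ i, ‖z i - b i‖ ^ 2
  have hseg : ∀ t : ℝ, q (AffineMap.lineMap w b t) = (1 - t) ^ 2 * q w := by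
    intro t
    simp only [q, Finset.mul_sum, AffineMap.lineMap_apply_module]
    refine Finset.sum_congr rfl fun i _ => ?_
    have : ((1 - t) • w + t • b) i - b i = (1 - t) • (w i - b i) := by
      simp only [Pi.add_apply, Pi.smul_apply]
      module
    rw [this, norm_smul, mul_pow, Real.norm_eq_abs, sq_abs]
  have hnear : ∀ᶠ t in 𝓝[>] (0 : ℝ), q w ≤ q (AffineMap.lineMap w b t) := by
    have hlim : Tendsto (AffineMap.lineMap w b) (𝓝[>] (0 : ℝ)) (𝓝 w) := by
      simpa using (AffineMap.lineMap_continuous.tendsto (0 : ℝ)).mono_left nhdsWithin_le_nhds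
    exact hlim.eventually h
  obtain ⟨t, hwt, ht0, ht1⟩ := (hnear.and (Ioo_mem_nhdsGT one_pos)).exists
  have hq_nonneg : 0 ≤ q w := Finset.sum_nonneg fun i _ => sq_nonneg _
  have hq : q w = 0 := by
    rw [hseg] at hwt
    nlinarith [mul_pos ht0 (by linarith : (0 : ℝ) < 2 - t)]
  funext i
  have hi := (Finset.sum_eq_zero_iff_of_nonneg fun i _ => sq_nonneg ‖w i - b i‖).mp hq i
    (Finset.mem_univ i)
  rwa [sq_eq_zero_iff, norm_eq_zero, sub_eq_zero] at hi

section Frechet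

variable {E : Type*} [NormedAddCommGroup E] [InnerProductSpace ℝ E] {m J : ℕ}

theorem sqD_le (X Y : Fin J → E) (σ : Equiv.Perm (Fin J)) :
    sqD X Y ≤ ∑ i, ‖X i - Y (σ i)‖ ^ 2 :=
  ciInf_le (Finite.bddBelow_range _) σ

theorem exists_perm_sqD_eq (X Y : Fin J → E) :
    ∃ σ : Equiv.Perm (Fin J), sqD X Y = ∑ i, ‖X i - Y (σ i)‖ ^ 2 := by
  obtain ⟨σ, hσ⟩ := Finite.exists_min fun σ : Equiv.Perm (Fin J) => ∑ i, ‖X i - Y (σ i)‖ ^ 2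
  exact ⟨σ, le_antisymm (sqD_le X Y σ) (le_ciInf hσ)⟩

theorem sum_sum_norm_sub_sq_eq (X : Fin m → Fin J → E) (σ : Fin m → Equiv.Perm (Fin J))
    (Z : Fin J → E) :
    ∑ j, ∑ i, ‖Z i - X j (σ j i)‖ ^ 2 =
      m * ∑ i, ‖Z i - (1 / m : ℝ) • ∑ j, X j (σ j i)‖ ^ 2 +
        ∑ i, ∑ j, ‖(1 / m : ℝ) • ∑ k, X k (σ k i) - X j (σ j i)‖ ^ 2 := by
  rw [Finset.sum_comm, Finset.mul_sum, ← Finset.sum_add_distrib]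
  refine Finset.sum_congr rfl fun i _ => ?_
  simpa only [Fintype.card_fin, one_div] using
    sum_norm_sub_sq_eq_card_mul_add (fun j => X j (σ j i)) (Z i)

theorem IsLocalMinFrechet.isLocalMin_sum_sqD {X : Fin m → Fin J → E} {W : Fin J → E}
    (hW : IsLocalMinFrechet X W) (hm : m ≠ 0) : IsLocalMin (fun Z => ∑ j, sqD Z (X j)) W := by
  obtain ⟨r, hr, hmin⟩ := hW
  filter_upwards [Metric.ball_mem_nhds W hr] with Z hZ
  have hclose : ∀ i, ‖Z i - W i‖ < r := by
    rw [Metric.mem_ball, dist_pi_lt_iff hr] at hZ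
    simpa only [dist_eq_norm] using hZ
  exact le_of_mul_le_mul_left (hmin Z hclose) (by simp [Nat.pos_of_ne_zero hm])

theorem IsLocalMinFrechet.exists_eq_mean {X : Fin m → Fin J → E} {W : Fin J → E}
    (hW : IsLocalMinFrechet X W) (hm : m ≠ 0) :
    ∃ σ : Fin m → Equiv.Perm (Fin J), W = fun i => (1 / m : ℝ) • ∑ j, X j (σ j i) := by
  choose σ hσ using fun j => exists_perm_sqD_eq W (X j)
  refine ⟨σ, eq_of_isLocalMin_sum_norm_sub_sq ?_⟩
  filter_upwards [hW.isLocalMin_sum_sqD hm] with Z hZ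
  have hsurrogate : ∑ j, sqD Z (X j) ≤ ∑ j, ∑ i, ‖Z i - X j (σ j i)‖ ^ 2 :=
    Finset.sum_le_sum fun j _ => sqD_le Z (X j) (σ j)
  rw [Finset.sum_congr rfl fun j _ => hσ j] at hZ
  rw [sum_sum_norm_sub_sq_eq] at hZ hsurrogate
  exact le_of_mul_le_mul_left (a := (m : ℝ)) (by linarith) (by simp [Nat.pos_of_ne_zero hm])

end Frechet

/-- Finiteness of the set of local minima of the empirical Fréchet function: every
local minimum is an arithmetic mean along an `m`-tuple of permutations, so there
are at most `(J!)^m` of them, independently of any weighting of the samples. -/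
theorem local_minima_finite
    {E : Type*} [NormedAddCommGroup E] [InnerProductSpace ℝ E] (m J : ℕ) (hm : 1 ≤ m)
    (X : Fin m → Fin J → E) :
    {W : Fin J → E | IsLocalMinFrechet X W} ⊆
      Set.range (fun σ : Fin m → Equiv.Perm (Fin J) =>
        fun i => (1 / m : ℝ) • ∑ j, X j (σ j i)) ∧
    {W : Fin J → E | IsLocalMinFrechet X W}.Finite ∧
    Nat.card {W : Fin J → E | IsLocalMinFrechet X W} ≤ (Nat.factorial J) ^ m := by
  have hsub : {W : Fin J → E | IsLocalMinFrechet X W} ⊆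
      Set.range (fun σ : Fin m → Equiv.Perm (Fin J) =>
        fun i => (1 / m : ℝ) • ∑ j, X j (σ j i)) := fun W hW =>
    let ⟨σ, hσ⟩ := IsLocalMinFrechet.exists_eq_mean hW (by omega)
    ⟨σ, hσ.symm⟩
  refine ⟨hsub, (Set.finite_range _).subset hsub, ?_⟩
  calc Nat.card {W : Fin J → E | IsLocalMinFrechet X W}
      ≤ Nat.card (Set.range fun σ : Fin m → Equiv.Perm (Fin J) =>
          fun i => (1 / m : ℝ) • ∑ j, X j (σ j i)) := Nat.card_mono (Set.finite_range _) hsub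
    _ ≤ Nat.card (Fin m → Equiv.Perm (Fin J)) := Finite.card_range_le _
    _ = (Nat.factorial J) ^ m := by simp [Fintype.card_perm]
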